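/- arXiv:2305.07819 — 2 statements merged into one kernel-verified Lean document; each statement's English description precedes it below -/
import Mathlib

section
/- Given a finite family of closed bounded intervals in ℝ, there exists a subfamily of pairwise disjoint intervals whose total length is at least half of the Lebesgue measure of the union of the original family. -/
open Set

private lemma disj_of_lt {a₁ b₁ a₂ b₂ : ℝ} (h : b₁ < a₂) :
    Disjoint (Set.Icc a₁ b₁) (Set.Icc a₂ b₂) := by
  rw [Set.disjoint_left]
  rintro x ⟨_, hx1⟩ ⟨hx2, _⟩
  linarith

/-- Two-chain sweep lemma. -/
private lemma auxA (n : ℕ) (a b : Fin n → ℝ) (hab : ∀ i, a i ≤ b i) :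
    ∀ (m : ℕ) (T : Finset (Fin n)), T.card ≤ m → ∀ (i : Fin n) (c : ℝ), a i ≤ c →
    (∀ j ∈ T, a j < a i) → (∀ j ∈ T, b j ≤ c) →
    ∃ S1 S2 : Finset (Fin n), S1 ⊆ T ∧ S2 ⊆ T ∧
      (∀ p ∈ S1, ∀ q ∈ S1, p ≠ q → Disjoint (Set.Icc (a p) (b p)) (Set.Icc (a q) (b q))) ∧
      (∀ p ∈ S2, ∀ q ∈ S2, p ≠ q → Disjoint (Set.Icc (a p) (b p)) (Set.Icc (a q) (b q))) ∧
      (∀ p ∈ S1, b p < a i) ∧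
      (⋃ j ∈ T, Set.Icc (a j) (b j)) ⊆
        Set.Icc (a i) c ∪ (⋃ j ∈ S1, Set.Icc (a j) (b j)) ∪ (⋃ j ∈ S2, Set.Icc (a j) (b j)) := by
  intro m
  induction m with
  | zero =>
    intro T hT i c _ _ _
    refine ⟨∅, ∅, by simp, by simp, by simp, by simp, by simp, ?_⟩
    have : T = ∅ := Finset.card_eq_zero.mp (Nat.le_zero.mp hT)
    simp [this]
  | succ m ih =>
    intro T hT i c hic hTa hTb
    by_cases hC : ∃ j ∈ T, a i ≤ b j
    · -- pick i₂ with minimal a among candidates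
      obtain ⟨i₂, hi₂mem, hi₂min⟩ :=
        Finset.exists_min_image (T.filter (fun j => a i ≤ b j)) a
          ⟨hC.choose, Finset.mem_filter.mpr ⟨hC.choose_spec.1, hC.choose_spec.2⟩⟩
      have hi₂T : i₂ ∈ T := (Finset.mem_filter.mp hi₂mem).1
      have hi₂b : a i ≤ b i₂ := (Finset.mem_filter.mp hi₂mem).2
      set T'' := T.filter (fun j => a j < a i₂) with hT''def
      have hT''sub : T'' ⊆ T := Finset.filter_subset _ _
      have hi₂not : i₂ ∉ T'' := by simp [hT''def]
      have hcard : T''.card ≤ m := by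
        have : T''.card < T.card := Finset.card_lt_card ⟨hT''sub, fun h => hi₂not (h hi₂T)⟩
        omega
      have hT''b : ∀ j ∈ T'', b j < a i := by
        intro j hj
        by_contra h
        push_neg at h
        have := hi₂min j (Finset.mem_filter.mpr ⟨hT''sub hj, h⟩)
        have := (Finset.mem_filter.mp hj).2
        linarith
      obtain ⟨S1, S2, hS1sub, hS2sub, hS1d, hS2d, hS1b, hcov⟩ :=
        ih T'' hcard i₂ c (le_trans (le_of_lt (hTa i₂ hi₂T)) hic)
          (fun j hj => (Finset.mem_filter.mp hj).2)
          (fun j hj => hTb j (hT''sub hj))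
      refine ⟨S2, insert i₂ S1, hS2sub.trans hT''sub,
        Finset.insert_subset hi₂T (hS1sub.trans hT''sub), hS2d, ?_, ?_, ?_⟩
      · -- pairwise disjoint for insert i₂ S1
        intro p hp q hq hpq
        rcases Finset.mem_insert.mp hp with rfl | hp'
        · rcases Finset.mem_insert.mp hq with rfl | hq'
          · exact absurd rfl hpq
          · exact (disj_of_lt (hS1b q hq')).symm
        · rcases Finset.mem_insert.mp hq with rfl | hq'
          · exact disj_of_lt (hS1b p hp')
          · exact hS1d p hp' q hq' hpq
      · intro p hp; exact hT''b p (hS2sub hp)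
      · -- coverage
        intro x hx
        simp only [Set.mem_iUnion] at hx
        obtain ⟨j, hjT, hxj⟩ := hx
        by_cases hj'' : j ∈ T''
        · have := hcov (Set.mem_biUnion hj'' hxj)
          rcases this with (h | h) | h
          · -- x ∈ Icc (a i₂) c : either in Icc i₂ or in Icc (a i) c
            rcases le_or_gt x (b i₂) with hxb | hxb
            · exact Or.inr (Set.mem_biUnion (Finset.mem_insert_self _ _) ⟨h.1, hxb⟩)
            · exact Or.inl (Or.inl ⟨le_trans hi₂b (le_of_lt hxb), h.2⟩)
          · exact Or.inr (by
              simp only [Set.mem_iUnion] at h ⊢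
              obtain ⟨k, hk, hxk⟩ := h
              exact ⟨k, Finset.mem_insert_of_mem hk, hxk⟩)
          · exact Or.inl (Or.inr h)
        · -- a j ≥ a i₂, so Icc j ⊆ Icc (a i₂) c ⊆ ...
          have haj : a i₂ ≤ a j := by
            by_contra h
            exact hj'' (Finset.mem_filter.mpr ⟨hjT, by linarith⟩)
          have hx1 : a i₂ ≤ x := le_trans haj hxj.1
          have hx2 : x ≤ c := le_trans hxj.2 (hTb j hjT)
          rcases le_or_gt x (b i₂) with hxb | hxb
          · exact Or.inr (Set.mem_biUnion (Finset.mem_insert_self _ _) ⟨hx1, hxb⟩)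
          · exact Or.inl (Or.inl ⟨le_trans hi₂b (le_of_lt hxb), hx2⟩)
    · -- no candidate: all b j < a i; start a fresh component
      push_neg at hC
      rcases T.eq_empty_or_nonempty with rfl | hTne
      · exact ⟨∅, ∅, by simp, by simp, by simp, by simp, by simp, by simp⟩
      obtain ⟨i₁, hi₁T, hi₁max⟩ := Finset.exists_max_image T b hTne
      set T' := T.filter (fun j => a j < a i₁) with hT'def
      have hT'sub : T' ⊆ T := Finset.filter_subset _ _
      have hi₁not : i₁ ∉ T' := by simp [hT'def]
      have hcard : T'.card ≤ m := by
        have : T'.card < T.card := Finset.card_lt_card ⟨hT'sub, fun h => hi₁not (h hi₁T)⟩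
        omega
      obtain ⟨S1, S2, hS1sub, hS2sub, hS1d, hS2d, hS1b, hcov⟩ :=
        ih T' hcard i₁ (b i₁) (hab i₁)
          (fun j hj => (Finset.mem_filter.mp hj).2)
          (fun j hj => hi₁max j (hT'sub hj))
      refine ⟨insert i₁ S1, S2, Finset.insert_subset hi₁T (hS1sub.trans hT'sub),
        hS2sub.trans hT'sub, ?_, hS2d, ?_, ?_⟩
      · intro p hp q hq hpq
        rcases Finset.mem_insert.mp hp with rfl | hp'
        · rcases Finset.mem_insert.mp hq with rfl | hq'
          · exact absurd rfl hpq
          · exact (disj_of_lt (hS1b q hq')).symm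
        · rcases Finset.mem_insert.mp hq with rfl | hq'
          · exact disj_of_lt (hS1b p hp')
          · exact hS1d p hp' q hq' hpq
      · intro p hp
        rcases Finset.mem_insert.mp hp with h | hp'
        · rw [h]; exact hC i₁ hi₁T
        · linarith [hS1b p hp', hab i₁, hC i₁ hi₁T]
      · intro x hx
        simp only [Set.mem_iUnion] at hx
        obtain ⟨j, hjT, hxj⟩ := hx
        by_cases hj' : j ∈ T'
        · have := hcov (Set.mem_biUnion hj' hxj)
          rcases this with (h | h) | h
          · exact Or.inl (Or.inr (Set.mem_biUnion (Finset.mem_insert_self _ _) h))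
          · exact Or.inl (Or.inr (by
              simp only [Set.mem_iUnion] at h ⊢
              obtain ⟨k, hk, hxk⟩ := h
              exact ⟨k, Finset.mem_insert_of_mem hk, hxk⟩))
          · exact Or.inr h
        · have haj : a i₁ ≤ a j := by
            by_contra h
            exact hj' (Finset.mem_filter.mpr ⟨hjT, by linarith⟩)
          exact Or.inl (Or.inr (Set.mem_biUnion (Finset.mem_insert_self _ _)
            ⟨le_trans haj hxj.1, le_trans hxj.2 (hi₁max j hjT)⟩))

/-- Given a finite family of closed bounded intervals in `ℝ`, there is a subfamily of pairwise
disjoint intervals whose total length is at least half of the Lebesgue measure of the union. -/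
theorem stmt1 (n : ℕ) (a b : Fin n → ℝ) (hab : ∀ i, a i ≤ b i) :
    ∃ S : Finset (Fin n),
      (∀ i ∈ S, ∀ j ∈ S, i ≠ j → Disjoint (Set.Icc (a i) (b i)) (Set.Icc (a j) (b j))) ∧
      (MeasureTheory.volume (⋃ i, Set.Icc (a i) (b i))).toReal / 2 ≤ ∑ j ∈ S, (b j - a j) := by
  classical
  rcases Finset.univ.eq_empty_or_nonempty (α := Fin n) with huniv | hne
  · refine ⟨∅, by simp, ?_⟩
    have : (⋃ i, Set.Icc (a i) (b i)) = ∅ := by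
      apply Set.eq_empty_of_forall_notMem
      intro x hx
      simp only [Set.mem_iUnion] at hx
      obtain ⟨i, -⟩ := hx
      exact absurd (Finset.mem_univ i) (by simp [huniv])
    simp [this]
  obtain ⟨i₁, hi₁T, hi₁max⟩ := Finset.exists_max_image Finset.univ b hne
  set T' := Finset.univ.filter (fun j => a j < a i₁) with hT'def
  obtain ⟨S1, S2, hS1sub, hS2sub, hS1d, hS2d, hS1b, hcov⟩ :=
    auxA n a b hab (Finset.univ : Finset (Fin n)).card T' (Finset.card_le_card (Finset.filter_subset _ _))
      i₁ (b i₁) (hab i₁)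
      (fun j hj => (Finset.mem_filter.mp hj).2)
      (fun j hj => hi₁max j (Finset.mem_univ j))
  -- two disjoint families: insert i₁ S1 and S2, covering everything
  set A : Finset (Fin n) := insert i₁ S1 with hAdef
  have hAd : ∀ p ∈ A, ∀ q ∈ A, p ≠ q → Disjoint (Set.Icc (a p) (b p)) (Set.Icc (a q) (b q)) := by
    intro p hp q hq hpq
    rcases Finset.mem_insert.mp hp with rfl | hp'
    · rcases Finset.mem_insert.mp hq with rfl | hq'
      · exact absurd rfl hpq
      · exact (disj_of_lt (hS1b q hq')).symm
    · rcases Finset.mem_insert.mp hq with rfl | hq'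
      · exact disj_of_lt (hS1b p hp')
      · exact hS1d p hp' q hq' hpq
  have hcover : (⋃ i, Set.Icc (a i) (b i)) ⊆
      (⋃ j ∈ A, Set.Icc (a j) (b j)) ∪ (⋃ j ∈ S2, Set.Icc (a j) (b j)) := by
    intro x hx
    simp only [Set.mem_iUnion] at hx
    obtain ⟨j, hxj⟩ := hx
    by_cases hj' : j ∈ T'
    · have := hcov (Set.mem_biUnion hj' hxj)
      rcases this with (h | h) | h
      · exact Or.inl (Set.mem_biUnion (Finset.mem_insert_self _ _) h)
      · exact Or.inl (by
          simp only [Set.mem_iUnion] at h ⊢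
          obtain ⟨k, hk, hxk⟩ := h
          exact ⟨k, Finset.mem_insert_of_mem hk, hxk⟩)
      · exact Or.inr h
    · have haj : a i₁ ≤ a j := by
        by_contra h
        exact hj' (Finset.mem_filter.mpr ⟨Finset.mem_univ j, by linarith⟩)
      exact Or.inl (Set.mem_biUnion (Finset.mem_insert_self _ _)
        ⟨le_trans haj hxj.1, le_trans hxj.2 (hi₁max j (Finset.mem_univ j))⟩)
  -- measure computations
  have hmeas : ∀ (S : Finset (Fin n)),
      (∀ p ∈ S, ∀ q ∈ S, p ≠ q → Disjoint (Set.Icc (a p) (b p)) (Set.Icc (a q) (b q))) →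
      MeasureTheory.volume (⋃ j ∈ S, Set.Icc (a j) (b j)) =
        ∑ j ∈ S, ENNReal.ofReal (b j - a j) := by
    intro S hS
    rw [MeasureTheory.measure_biUnion_finset]
    · simp [Real.volume_Icc]
    · intro p hp q hq hpq
      exact hS p hp q hq hpq
    · intro j _
      exact measurableSet_Icc
  have hvolA := hmeas A hAd
  have hvolB := hmeas S2 hS2d
  have hle : MeasureTheory.volume (⋃ i, Set.Icc (a i) (b i)) ≤
      ∑ j ∈ A, ENNReal.ofReal (b j - a j) + ∑ j ∈ S2, ENNReal.ofReal (b j - a j) := by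
    calc MeasureTheory.volume (⋃ i, Set.Icc (a i) (b i))
        ≤ MeasureTheory.volume ((⋃ j ∈ A, Set.Icc (a j) (b j)) ∪ (⋃ j ∈ S2, Set.Icc (a j) (b j))) :=
          MeasureTheory.measure_mono hcover
      _ ≤ MeasureTheory.volume (⋃ j ∈ A, Set.Icc (a j) (b j)) +
            MeasureTheory.volume (⋃ j ∈ S2, Set.Icc (a j) (b j)) := MeasureTheory.measure_union_le _ _
      _ = _ := by rw [hvolA, hvolB]
  have hsum : ∀ (S : Finset (Fin n)),
      (∑ j ∈ S, ENNReal.ofReal (b j - a j)).toReal = ∑ j ∈ S, (b j - a j) := by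
    intro S
    rw [ENNReal.toReal_sum (by intro j _; exact ENNReal.ofReal_ne_top)]
    exact Finset.sum_congr rfl (fun j _ => ENNReal.toReal_ofReal (by linarith [hab j]))
  have hfin : (∑ j ∈ A, ENNReal.ofReal (b j - a j) + ∑ j ∈ S2, ENNReal.ofReal (b j - a j)) ≠ ⊤ := by
    apply ENNReal.add_ne_top.mpr
    constructor <;> exact (ENNReal.sum_lt_top.mpr (fun j _ => ENNReal.ofReal_lt_top)).ne
  have hreal : (MeasureTheory.volume (⋃ i, Set.Icc (a i) (b i))).toReal ≤
      (∑ j ∈ A, (b j - a j)) + (∑ j ∈ S2, (b j - a j)) := by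
    have := ENNReal.toReal_mono hfin hle
    rwa [ENNReal.toReal_add, hsum, hsum] at this
    · exact (ENNReal.sum_lt_top.mpr (fun j _ => ENNReal.ofReal_lt_top)).ne
    · exact (ENNReal.sum_lt_top.mpr (fun j _ => ENNReal.ofReal_lt_top)).ne
  rcases le_total (∑ j ∈ A, (b j - a j)) (∑ j ∈ S2, (b j - a j)) with h | h
  · exact ⟨S2, hS2d, by linarith⟩
  · exact ⟨A, hAd, by linarith⟩
end

section
/- Let X be a compact metric space, φ : X → X a homeomorphism, and f : X → ℝ continuous. For every x ∈ X, the Lagrange value ℓ(x) = limsup_{n→∞} f(φⁿ(x)) belongs to the set of Markov values {m(y) : y ∈ X}, where m(y) = sup_{n∈ℤ} f(φⁿ(y)). -/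
open Filter Topology

/-- The Lagrange value `ℓ(x) = limsup_{n→∞} f(φⁿ(x))` of any point of a compact metric space
under a homeomorphism `φ` is the Markov value `m(y) = sup_{n∈ℤ} f(φⁿ(y))` of some point `y`. -/
theorem stmt3 {X : Type*} [MetricSpace X] [CompactSpace X] [Nonempty X]
    (φ : X ≃ₜ X) (f : X → ℝ) (hf : Continuous f) (x : X) :
    ∃ y : X, (⨆ n : ℤ, f ((φ.toEquiv ^ n) y)) =
      Filter.limsup (fun n : ℕ => f ((φ.toEquiv ^ (n : ℤ)) x)) Filter.atTop := by
  set g : ℕ → ℝ := fun n => f ((φ.toEquiv ^ (n : ℤ)) x) with hg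
  set L := Filter.limsup g Filter.atTop with hL
  -- continuity of integer powers of φ
  have contpow : ∀ m : ℤ, Continuous fun z : X => (φ.toEquiv ^ m) z := by
    intro m
    induction m using Int.induction_on with
    | zero => simpa using continuous_id'
    | succ k ih =>
        have h : ∀ z : X, (φ.toEquiv ^ ((k : ℤ) + 1)) z = (φ.toEquiv ^ (k : ℤ)) (φ z) := by
          intro z; rw [zpow_add, zpow_one]; rfl
        simpa only [h, Function.comp_def] using ih.comp φ.continuous
    | pred k ih =>
        have h : ∀ z : X, (φ.toEquiv ^ (-(k : ℤ) - 1)) z = (φ.toEquiv ^ (-(k : ℤ))) (φ.symm z) := by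
          intro z; rw [sub_eq_add_neg, zpow_add, zpow_neg_one]; rfl
        simpa only [h, Function.comp_def] using ih.comp φ.symm.continuous
  -- global bounds on f
  obtain ⟨zM, hzM⟩ := hf.exists_forall_ge (by simp [Filter.cocompact_eq_bot])
  obtain ⟨zm, hzm⟩ := hf.exists_forall_le (by simp [Filter.cocompact_eq_bot])
  set M := f zM
  have hM : ∀ z : X, f z ≤ M := hzM
  have hm' : ∀ z : X, f zm ≤ f z := hzm
  have h1 : IsBoundedUnder (· ≤ ·) atTop g := isBoundedUnder_of ⟨M, fun n => hM _⟩
  have h2 : IsBoundedUnder (· ≥ ·) atTop g := isBoundedUnder_of ⟨f zm, fun n => hm' _⟩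
  have hco : IsCoboundedUnder (· ≤ ·) atTop g := h2.isCoboundedUnder_le
  have hev : ∀ ε : ℝ, 0 < ε → ∀ᶠ n in atTop, g n < L + ε := fun ε hε =>
    eventually_lt_of_limsup_lt (by linarith) h1
  have hfr : ∀ ε : ℝ, 0 < ε → ∃ᶠ n in atTop, L - ε < g n := fun ε hε =>
    frequently_lt_of_lt_limsup hco (by linarith)
  -- choose a sequence realizing the limsup
  have key : ∀ k : ℕ, ∃ n : ℕ, (k ≤ n ∧ g n < L + 1 / (k + 1)) ∧ L - 1 / (k + 1) < g n := by
    intro k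
    have hε : (0 : ℝ) < 1 / (k + 1) := by positivity
    exact (((eventually_ge_atTop k).and (hev _ hε)).and_frequently (hfr _ hε)).exists
  choose n hn using key
  have hnk : ∀ k, k ≤ n k := fun k => (hn k).1.1
  have hn_top : Tendsto n atTop atTop := tendsto_atTop_mono hnk tendsto_id
  have hone : Tendsto (fun k : ℕ => (1 : ℝ) / (k + 1)) atTop (𝓝 0) :=
    tendsto_one_div_add_atTop_nhds_zero_nat
  have hb1 : Tendsto (fun k : ℕ => L - 1 / (k + 1 : ℝ)) atTop (𝓝 L) := by
    simpa using tendsto_const_nhds.sub hone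
  have hb2 : Tendsto (fun k : ℕ => L + 1 / (k + 1 : ℝ)) atTop (𝓝 L) := by
    simpa using tendsto_const_nhds.add hone
  have hgn : Tendsto (fun k => g (n k)) atTop (𝓝 L) :=
    tendsto_of_tendsto_of_tendsto_of_le_of_le hb1 hb2
      (fun k => (hn k).2.le) (fun k => (hn k).1.2.le)
  -- extract a convergent subsequence of the orbit points
  obtain ⟨y, -, ψ, hψ, hyt⟩ :=
    isCompact_univ.tendsto_subseq (x := fun k => (φ.toEquiv ^ ((n k : ℤ))) x)
      (fun k => Set.mem_univ _)
  refine ⟨y, ?_⟩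
  -- f y = L
  have hsub : Tendsto (fun k => g (n (ψ k))) atTop (𝓝 L) := hgn.comp hψ.tendsto_atTop
  have hfy : Tendsto (fun k => f ((φ.toEquiv ^ ((n (ψ k) : ℤ))) x)) atTop (𝓝 (f y)) :=
    (hf.tendsto y).comp hyt
  have hfyL : f y = L := tendsto_nhds_unique hfy hsub
  -- every Markov term is ≤ L
  have hle : ∀ m : ℤ, f ((φ.toEquiv ^ m) y) ≤ L := by
    intro m
    have hpk : Tendsto (fun k => f ((φ.toEquiv ^ m) ((φ.toEquiv ^ ((n (ψ k) : ℤ))) x)))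
        atTop (𝓝 (f ((φ.toEquiv ^ m) y))) :=
      (hf.tendsto _).comp (((contpow m).tendsto y).comp hyt)
    refine le_of_forall_pos_le_add ?_
    intro ε hε
    obtain ⟨N, hN⟩ := (hev ε hε).exists_forall_of_atTop
    have hNψ : ∀ᶠ k in atTop, (N : ℤ) ≤ m + (n (ψ k) : ℤ) := by
      have : Tendsto (fun k => n (ψ k)) atTop atTop := hn_top.comp hψ.tendsto_atTop
      have h' : ∀ᶠ k in atTop, ((N : ℤ) + |m|).toNat ≤ n (ψ k) := this.eventually_ge_atTop _
      filter_upwards [h'] with k hk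
      have : ((N : ℤ) + |m|) ≤ (n (ψ k) : ℤ) := le_trans (Int.self_le_toNat _) (by exact_mod_cast hk)
      have habs : -|m| ≤ m := neg_abs_le m
      omega
    have hbnd : ∀ᶠ k in atTop,
        f ((φ.toEquiv ^ m) ((φ.toEquiv ^ ((n (ψ k) : ℤ))) x)) ≤ L + ε := by
      filter_upwards [hNψ] with k hk
      have h0 : (0 : ℤ) ≤ m + (n (ψ k) : ℤ) := le_trans (by positivity) hk
      have heq : (φ.toEquiv ^ m) ((φ.toEquiv ^ ((n (ψ k) : ℤ))) x)
          = (φ.toEquiv ^ (((m + (n (ψ k) : ℤ)).toNat : ℤ))) x := by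
        rw [Int.toNat_of_nonneg h0, zpow_add]; rfl
      rw [heq]
      have : g ((m + (n (ψ k) : ℤ)).toNat) < L + ε := by
        apply hN
        omega
      exact this.le
    exact le_of_tendsto hpk hbnd
  -- compute the supremum
  have bdd : BddAbove (Set.range fun m : ℤ => f ((φ.toEquiv ^ m) y)) := by
    refine ⟨M, ?_⟩; rintro _ ⟨m, rfl⟩; exact hM _
  refine le_antisymm (ciSup_le hle) ?_
  have h0 : f ((φ.toEquiv ^ (0 : ℤ)) y) = L := by simpa using hfyL
  calc L = f ((φ.toEquiv ^ (0 : ℤ)) y) := h0.symm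
    _ ≤ ⨆ m : ℤ, f ((φ.toEquiv ^ m) y) := le_ciSup bdd 0
end
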